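/- arXiv:2512.24025 — 2 statements merged into one kernel-verified Lean document; each statement's English description precedes it below -/
import Mathlib

section
/- Let C and D be ascending chain complexes over a field κ such that C_n = D_n = 0 for all n < 0 and such that each C_n admits an ℓ-orthogonal basis and each D_n admits an ℓ-orthogonal basis. Then every filtered quasi-isomorphism f : C → D is a filtered homotopy equivalence; that is, there exists a filtered chain map g : D → C such that g ∘ f is filtered homotopic to the identity of C and f ∘ g is filtered homotopic to the identity of D. -/
/-!
The mapping cone of `f`, filtered by the maximum of the two filtrations, is acyclic at every
filtration level precisely because `f` is a filtered quasi-isomorphism. Since its terms have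
orthogonal bases, a filtered map can be prescribed freely on basis vectors, so filtered
primitives of cycles can be chosen linearly; starting from the degrees where the cone vanishes,
this produces a filtered contraction `s` of the cone one degree at a time. The components of `s`
on `D` and on `C` are the homotopy inverse `g` and the homotopy `g ∘ f ≃ id`; the remaining
component is the homotopy `f ∘ g ≃ id`.
-/

open scoped Classical

universe u v

/-- `ℓ` is a filtration function making `(V, ℓ)` a filtered vector space over `κ`. -/
def IsFiltrationFunction (κ : Type u) [Field κ] {V : Type v} [AddCommGroup V] [Module κ V]
    (ℓ : V → WithBot ℝ) : Prop :=
  (∀ v : V, ℓ v = ⊥ ↔ v = 0) ∧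
    (∀ (c : κ) (v : V), c ≠ 0 → ℓ (c • v) = ℓ v) ∧
      ∀ v w : V, ℓ (v + w) ≤ max (ℓ v) (ℓ w)

/-- A subset `S ⊆ V ∖ {0}` is `ℓ`-orthogonal. -/
def IsOrthogonal (κ : Type u) [Field κ] {V : Type v} [AddCommGroup V] [Module κ V]
    (ℓ : V → WithBot ℝ) (S : Set V) : Prop :=
  (0 : V) ∉ S ∧
    ∀ T : Finset V, (T : Set V) ⊆ S → ∀ c : V → κ,
      ℓ (∑ v ∈ T, c v • v) = (T.filter fun v => c v ≠ 0).sup ℓ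

/-- Transport along an equality of indices. -/
def castL (κ : Type u) [Field κ] {C : ℤ → Type v} [∀ k, AddCommGroup (C k)]
    [∀ k, Module κ (C k)] {i j : ℤ} (h : i = j) : C i →ₗ[κ] C j := by
  subst h; exact LinearMap.id

/-- The boundary map `∂_{k+1} : C_{k+1} → C_k`, viewed as landing in `C_k`. -/
def bdryMap (κ : Type u) [Field κ] {C : ℤ → Type v} [∀ k, AddCommGroup (C k)]
    [∀ k, Module κ (C k)] (d : ∀ k : ℤ, C k →ₗ[κ] C (k - 1)) (k : ℤ) :
    C (k + 1) →ₗ[κ] C k :=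
  (castL κ (show k + 1 - 1 = k by omega)).comp (d (k + 1))

/-- `(C, d, ℓ)` is an ascending chain complex over `κ`. -/
def IsAscendingComplex (κ : Type u) [Field κ] {C : ℤ → Type v} [∀ k, AddCommGroup (C k)]
    [∀ k, Module κ (C k)] (d : ∀ k : ℤ, C k →ₗ[κ] C (k - 1))
    (ℓ : ∀ k : ℤ, C k → WithBot ℝ) : Prop :=
  (∀ (k : ℤ) (x : C k), d (k - 1) (d k x) = 0) ∧
    (∀ k : ℤ, IsFiltrationFunction κ (ℓ k)) ∧
      ∀ (k : ℤ) (x : C k), ℓ (k - 1) (d k x) ≤ ℓ k x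

/-- `f` is a filtered quasi-isomorphism: for every `t ∈ ℝ` and every degree `k`, the map
induced by `f` on the homology of the sublevel complexes `C^{≤t} → D^{≤t}` is bijective,
expressed here at the level of (sublevel) cycles and boundaries. -/
def IsFilteredQuasiIso (κ : Type u) [Field κ] {C D : ℤ → Type v}
    [∀ k, AddCommGroup (C k)] [∀ k, Module κ (C k)]
    [∀ k, AddCommGroup (D k)] [∀ k, Module κ (D k)]
    (dC : ∀ k : ℤ, C k →ₗ[κ] C (k - 1)) (ℓC : ∀ k : ℤ, C k → WithBot ℝ)
    (dD : ∀ k : ℤ, D k →ₗ[κ] D (k - 1)) (ℓD : ∀ k : ℤ, D k → WithBot ℝ)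
    (f : ∀ k : ℤ, C k →ₗ[κ] D k) : Prop :=
  ∀ (t : ℝ) (k : ℤ),
    (∀ y : D k, dD k y = 0 → ℓD k y ≤ (t : WithBot ℝ) →
      ∃ x : C k, dC k x = 0 ∧ ℓC k x ≤ (t : WithBot ℝ) ∧
        ∃ z : D (k + 1), ℓD (k + 1) z ≤ (t : WithBot ℝ) ∧ bdryMap κ dD k z = y - f k x) ∧
    ∀ x : C k, dC k x = 0 → ℓC k x ≤ (t : WithBot ℝ) →
      (∃ w : D (k + 1), ℓD (k + 1) w ≤ (t : WithBot ℝ) ∧ bdryMap κ dD k w = f k x) →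
      ∃ u : C (k + 1), ℓC (k + 1) u ≤ (t : WithBot ℝ) ∧ bdryMap κ dC k u = x


section Transport

variable {κ : Type u} [Field κ] {C D : ℤ → Type v}
  [∀ k, AddCommGroup (C k)] [∀ k, Module κ (C k)]
  [∀ k, AddCommGroup (D k)] [∀ k, Module κ (D k)]

lemma castL_injective {i j : ℤ} (h : i = j) : Function.Injective (castL κ (C := C) h) := by
  subst h; exact Function.injective_id

lemma castL_eq_zero_iff {i j : ℤ} (h : i = j) (x : C i) : castL κ h x = 0 ↔ x = 0 := by
  subst h; rfl

lemma apply_castL (ℓ : ∀ k, C k → WithBot ℝ) {i j : ℤ} (h : i = j) (x : C i) :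
    ℓ j (castL κ h x) = ℓ i x := by
  subst h; rfl

lemma map_castL (φ : ∀ k, C k →ₗ[κ] D k) {i j : ℤ} (h : i = j) (x : C i) :
    φ j (castL κ h x) = castL κ h (φ i x) := by
  subst h; rfl

lemma map_castL_sub_one (d : ∀ k, C k →ₗ[κ] C (k - 1)) {i j : ℤ} (h : i = j) (x : C i) :
    d j (castL κ h x) = castL κ (by rw [h]) (d i x) := by
  subst h; rfl

lemma map_castL_add_one (H : ∀ k, C k →ₗ[κ] C (k + 1)) {i j : ℤ} (h : i = j) (x : C i) :
    H j (castL κ h x) = castL κ (by rw [h]) (H i x) := by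
  subst h; rfl

end Transport

namespace IsFiltrationFunction

variable {κ : Type u} [Field κ] {V W : Type v} [AddCommGroup V] [Module κ V]
  [AddCommGroup W] [Module κ W] {ℓ : V → WithBot ℝ} (hℓ : IsFiltrationFunction κ ℓ)
include hℓ

lemma apply_zero : ℓ 0 = ⊥ := (hℓ.1 0).2 rfl

lemma apply_smul_le (c : κ) (v : V) : ℓ (c • v) ≤ ℓ v := by
  rcases eq_or_ne c 0 with rfl | hc
  · rw [zero_smul, hℓ.apply_zero]; exact bot_le
  · exact (hℓ.2.1 c v hc).le

lemma apply_neg (v : V) : ℓ (-v) = ℓ v := by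
  simpa using hℓ.2.1 (-1) v (by norm_num)

lemma apply_add_le (v w : V) : ℓ (v + w) ≤ max (ℓ v) (ℓ w) := hℓ.2.2 v w

lemma apply_sub_le (v w : V) : ℓ (v - w) ≤ max (ℓ v) (ℓ w) := by
  simpa [sub_eq_add_neg, hℓ.apply_neg] using hℓ.apply_add_le v (-w)

lemma apply_sum_le {α : Type*} (T : Finset α) (u : α → V) :
    ℓ (∑ i ∈ T, u i) ≤ T.sup fun i => ℓ (u i) := by
  induction T using Finset.induction with
  | empty => simp [hℓ.apply_zero]
  | insert a T ha ih =>
    rw [Finset.sum_insert ha, Finset.sup_insert]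
    exact (hℓ.apply_add_le _ _).trans (max_le_max le_rfl ih)

lemma exists_eq_coe {v : V} (hv : v ≠ 0) : ∃ t : ℝ, ℓ v = t :=
  (WithBot.ne_bot_iff_exists.mp fun h => hv ((hℓ.1 v).1 h)).imp fun _ h => h.symm

lemma prod {ℓ' : W → WithBot ℝ} (hℓ' : IsFiltrationFunction κ ℓ') :
    IsFiltrationFunction κ fun x : V × W => max (ℓ x.1) (ℓ' x.2) := by
  refine ⟨fun x => ?_, fun c x hc => ?_, fun x y => ?_⟩
  · simp only [max_eq_bot, hℓ.1, hℓ'.1, Prod.ext_iff, Prod.fst_zero, Prod.snd_zero]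
  · simp only [Prod.smul_fst, Prod.smul_snd, hℓ.2.1 c _ hc, hℓ'.2.1 c _ hc]
  · simp only [Prod.fst_add, Prod.snd_add]
    refine max_le ((hℓ.apply_add_le _ _).trans ?_) ((hℓ'.apply_add_le _ _).trans ?_) <;>
      exact max_le_max (by simp) (by simp)

end IsFiltrationFunction

section OrthogonalBasis

variable {κ : Type u} [Field κ] {ι ι' : Type*} {V W U : Type v}
  [AddCommGroup V] [Module κ V] [AddCommGroup W] [Module κ W] [AddCommGroup U] [Module κ U]

/-- Only the inequality `≥` is required: for a filtration function the other one is automatic. -/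
def IsOrthogonalBasis (ℓ : V → WithBot ℝ) (b : Module.Basis ι κ V) : Prop :=
  ∀ x, (b.repr x).support.sup (fun i => ℓ (b i)) ≤ ℓ x

lemma IsOrthogonal.isOrthogonalBasis {ℓ : V → WithBot ℝ} {S : Set V} (hS : IsOrthogonal κ ℓ S)
    (hli : LinearIndependent κ (fun x : S => (x : V))) (hspan : Submodule.span κ S = ⊤) :
    IsOrthogonalBasis ℓ (Module.Basis.mk hli (by rw [Subtype.range_coe, hspan])) := by
  set b := Module.Basis.mk hli (by rw [Subtype.range_coe, hspan])
  intro x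
  set c := b.repr x
  let c' : V → κ := fun v => if h : v ∈ S then c ⟨v, h⟩ else 0
  have hT : ((c.support.map (Function.Embedding.subtype _) : Finset V) : Set V) ⊆ S := by
    intro v hv
    obtain ⟨i, -, rfl⟩ := Finset.mem_map.mp hv
    exact i.2
  have key := hS.2 _ hT c'
  have hsum : ∑ v ∈ c.support.map (Function.Embedding.subtype _), c' v • v = x := by
    conv_rhs => rw [← b.linearCombination_repr x]
    rw [Finset.sum_map, Finsupp.linearCombination_apply, Finsupp.sum]
    refine Finset.sum_congr rfl fun i _ => ?_
    simp only [Function.Embedding.coe_subtype, c', dif_pos i.2, b, Module.Basis.mk_apply]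
    rfl
  have hfilter : (c.support.map (Function.Embedding.subtype _)).filter (fun v => c' v ≠ 0) =
      c.support.map (Function.Embedding.subtype _) := by
    refine Finset.filter_true_of_mem fun v hv => ?_
    obtain ⟨i, hi, rfl⟩ := Finset.mem_map.mp hv
    simpa [c'] using Finsupp.mem_support_iff.mp hi
  rw [hsum, hfilter, Finset.sup_map] at key
  rw [key]
  simp [b, Function.comp_def]

lemma IsOrthogonalBasis.apply_le {ℓ : V → WithBot ℝ} {ℓW : W → WithBot ℝ}
    {b : Module.Basis ι κ V} (hb : IsOrthogonalBasis ℓ b) (hW : IsFiltrationFunction κ ℓW)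
    (φ : V →ₗ[κ] W) (hφ : ∀ i, ℓW (φ (b i)) ≤ ℓ (b i)) (x : V) : ℓW (φ x) ≤ ℓ x :=
  calc ℓW (φ x) = ℓW (∑ i ∈ (b.repr x).support, b.repr x i • φ (b i)) := by
        conv_lhs => rw [← b.linearCombination_repr x]
        simp [Finsupp.linearCombination_apply, Finsupp.sum]
    _ ≤ (b.repr x).support.sup fun i => ℓW (b.repr x i • φ (b i)) := hW.apply_sum_le _ _
    _ ≤ (b.repr x).support.sup fun i => ℓ (b i) :=
        Finset.sup_mono_fun fun i _ => (hW.apply_smul_le _ _).trans (hφ i)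
    _ ≤ ℓ x := hb x

lemma IsOrthogonalBasis.prod {ℓ : V → WithBot ℝ} {ℓ' : W → WithBot ℝ}
    {b : Module.Basis ι κ V} {b' : Module.Basis ι' κ W} (hb : IsOrthogonalBasis ℓ b)
    (hb' : IsOrthogonalBasis ℓ' b') (h₀ : ℓ 0 = ⊥) (h₀' : ℓ' 0 = ⊥) :
    IsOrthogonalBasis (fun x : V × W => max (ℓ x.1) (ℓ' x.2)) (b.prod b') := by
  intro x
  refine Finset.sup_le ?_
  rintro (i | i) hi <;> rw [Finsupp.mem_support_iff] at hi
  · rw [Module.Basis.prod_repr_inl] at hi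
    simp only [Module.Basis.prod_apply_inl_fst, Module.Basis.prod_apply_inl_snd, h₀', bot_le,
      max_eq_left]
    exact le_max_of_le_left <|
      (Finset.le_sup (f := fun i => ℓ (b i)) (Finsupp.mem_support_iff.mpr hi)).trans (hb x.1)
  · rw [Module.Basis.prod_repr_inr] at hi
    simp only [Module.Basis.prod_apply_inr_fst, Module.Basis.prod_apply_inr_snd, h₀, bot_le,
      max_eq_right]
    exact le_max_of_le_right <|
      (Finset.le_sup (f := fun i => ℓ' (b' i)) (Finsupp.mem_support_iff.mpr hi)).trans (hb' x.2)

lemma IsOrthogonalBasis.exists_filtered_lift {ℓ : V → WithBot ℝ} {ℓW : W → WithBot ℝ}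
    {b : Module.Basis ι κ V} (hb : IsOrthogonalBasis ℓ b) (hW : IsFiltrationFunction κ ℓW)
    (p : W →ₗ[κ] U) (ψ : V →ₗ[κ] U) (hψ : ∀ x, ∃ y, ℓW y ≤ ℓ x ∧ p y = ψ x) :
    ∃ σ : V →ₗ[κ] W, (∀ x, ℓW (σ x) ≤ ℓ x) ∧ p ∘ₗ σ = ψ := by
  choose y hyℓ hyp using fun i => hψ (b i)
  refine ⟨b.constr κ y, hb.apply_le hW _ fun i => ?_, b.ext fun i => ?_⟩
  · rw [b.constr_basis]; exact hyℓ i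
  · rw [LinearMap.comp_apply, b.constr_basis, hyp]

end OrthogonalBasis

section Contraction

-- Differentials are indexed as `d k : E (k + 1) → E k` (as `bdryMap` does), so that every
-- degree occurring is syntactically of the form `k + 1` and no transport along `castL` is needed.
variable {κ : Type u} [Field κ] {E : ℤ → Type v} [∀ k, AddCommGroup (E k)] [∀ k, Module κ (E k)]
  (d : ∀ k, E (k + 1) →ₗ[κ] E k) (ℓ : ∀ k, E k → WithBot ℝ)

/-- Contractions are built from these one degree at a time. -/
def FilteredSplitting (k : ℤ) : Type v :=
  {s : E k →ₗ[κ] E (k + 1) // (∀ x, ℓ (k + 1) (s x) ≤ ℓ k x) ∧ ∀ y, d k (s (d k y)) = d k y}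

variable {d ℓ}

def FilteredSplitting.zero (hℓ : ∀ k, IsFiltrationFunction κ (ℓ k)) {k : ℤ}
    (hk : ∀ x : E k, x = 0) : FilteredSplitting d ℓ k :=
  ⟨0, fun x => by simp [(hℓ (k + 1)).apply_zero], fun y => (hk _).trans (hk _).symm⟩

lemma exists_primitive_le (hℓ : ∀ k, IsFiltrationFunction κ (ℓ k))
    (hacyc : ∀ (t : ℝ) k (x : E (k + 1)), d k x = 0 → ℓ (k + 1) x ≤ t →
      ∃ y, ℓ (k + 1 + 1) y ≤ t ∧ d (k + 1) y = x)
    {k : ℤ} {x : E (k + 1)} (hx : d k x = 0) :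
    ∃ y, ℓ (k + 1 + 1) y ≤ ℓ (k + 1) x ∧ d (k + 1) y = x := by
  rcases eq_or_ne x 0 with rfl | hx₀
  · exact ⟨0, by simp [(hℓ _).apply_zero], map_zero _⟩
  · obtain ⟨t, ht⟩ := (hℓ _).exists_eq_coe hx₀
    rw [ht]
    exact hacyc t k x hx ht.le

lemma FilteredSplitting.exists_succ (hℓ : ∀ k, IsFiltrationFunction κ (ℓ k))
    (hdd : ∀ k x, d k (d (k + 1) x) = 0) (hdℓ : ∀ k x, ℓ k (d k x) ≤ ℓ (k + 1) x)
    (hacyc : ∀ (t : ℝ) k (x : E (k + 1)), d k x = 0 → ℓ (k + 1) x ≤ t →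
      ∃ y, ℓ (k + 1 + 1) y ≤ t ∧ d (k + 1) y = x)
    (hbasis : ∀ k, ∃ (ι : Type v) (b : Module.Basis ι κ (E k)), IsOrthogonalBasis (ℓ k) b)
    {k : ℤ} (p : FilteredSplitting d ℓ k) :
    ∃ q : FilteredSplitting d ℓ (k + 1), ∀ x, d (k + 1) (q.1 x) + p.1 (d k x) = x := by
  obtain ⟨s, hsℓ, hsplit⟩ := p
  -- `x - s (d x)` is a cycle, no higher than `x`; lift it filteredly along `d`
  let ψ : E (k + 1) →ₗ[κ] E (k + 1) := LinearMap.id - s ∘ₗ d k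
  have hψd : ∀ x, d k (ψ x) = 0 := fun x => by simp [ψ, hsplit]
  have hψℓ : ∀ x, ℓ (k + 1) (ψ x) ≤ ℓ (k + 1) x := fun x =>
    ((hℓ _).apply_sub_le _ _).trans (max_le le_rfl ((hsℓ _).trans (hdℓ _ _)))
  obtain ⟨ι, b, hb⟩ := hbasis (k + 1)
  obtain ⟨σ, hσℓ, hσ⟩ := hb.exists_filtered_lift (hℓ _) (d (k + 1)) ψ fun x =>
    (exists_primitive_le hℓ hacyc (hψd x)).imp fun _ hy => ⟨hy.1.trans (hψℓ x), hy.2⟩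
  have hσ' : ∀ x, d (k + 1) (σ x) + s (d k x) = x := fun x => by
    rw [← LinearMap.comp_apply, hσ]; simp [ψ]
  refine ⟨⟨σ, hσℓ, fun y => ?_⟩, hσ'⟩
  simpa [hdd] using hσ' (d (k + 1) y)

theorem exists_filtered_contraction (hℓ : ∀ k, IsFiltrationFunction κ (ℓ k))
    (hdd : ∀ k x, d k (d (k + 1) x) = 0) (hdℓ : ∀ k x, ℓ k (d k x) ≤ ℓ (k + 1) x)
    (hacyc : ∀ (t : ℝ) k (x : E (k + 1)), d k x = 0 → ℓ (k + 1) x ≤ t →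
      ∃ y, ℓ (k + 1 + 1) y ≤ t ∧ d (k + 1) y = x)
    (hbasis : ∀ k, ∃ (ι : Type v) (b : Module.Basis ι κ (E k)), IsOrthogonalBasis (ℓ k) b)
    (N : ℤ) (hN : ∀ k < N, ∀ x : E k, x = 0) :
    ∃ s : ∀ k, E k →ₗ[κ] E (k + 1),
      (∀ k x, ℓ (k + 1) (s k x) ≤ ℓ k x) ∧ ∀ k x, d (k + 1) (s (k + 1) x) + s k (d k x) = x := by
  choose next hnext using fun k (p : FilteredSplitting d ℓ k) =>
    p.exists_succ hℓ hdd hdℓ hacyc hbasis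
  let seq : ∀ k, FilteredSplitting d ℓ k := fun k =>
    Int.inductionOn' (motive := FilteredSplitting d ℓ) k (N - 1)
      (.zero hℓ (hN _ (by omega))) (fun k _ p => next k p)
      (fun k hk _ => .zero hℓ (hN _ (by omega)))
  refine ⟨fun k => (seq k).1, fun k => (seq k).2.1, fun k x => ?_⟩
  rcases lt_or_ge k (N - 1) with hk | hk
  · simp [hN (k + 1) (by omega) x]
  · have hseq : seq (k + 1) = next k (seq k) := Int.inductionOn'_add_one hk
    simp only [hseq, hnext]

end Contraction

section Boundary

variable {κ : Type u} [Field κ] {C D : ℤ → Type v}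
  [∀ k, AddCommGroup (C k)] [∀ k, Module κ (C k)]
  [∀ k, AddCommGroup (D k)] [∀ k, Module κ (D k)]

lemma bdryMap_apply (d : ∀ k, C k →ₗ[κ] C (k - 1)) (k : ℤ) (x : C (k + 1)) :
    bdryMap κ d k x = castL κ (Int.add_sub_cancel k 1) (d (k + 1) x) := rfl

lemma bdryMap_eq_zero_iff (d : ∀ k, C k →ₗ[κ] C (k - 1)) (k : ℤ) (x : C (k + 1)) :
    bdryMap κ d k x = 0 ↔ d (k + 1) x = 0 :=
  castL_eq_zero_iff _ _

lemma IsAscendingComplex.bdryMap_bdryMap {d : ∀ k, C k →ₗ[κ] C (k - 1)}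
    {ℓ : ∀ k, C k → WithBot ℝ} (h : IsAscendingComplex κ d ℓ) (k : ℤ) (x : C (k + 1 + 1)) :
    bdryMap κ d k (bdryMap κ d (k + 1) x) = 0 := by
  simp [bdryMap_apply, map_castL_sub_one, h.1]

lemma IsAscendingComplex.apply_bdryMap_le {d : ∀ k, C k →ₗ[κ] C (k - 1)}
    {ℓ : ∀ k, C k → WithBot ℝ} (h : IsAscendingComplex κ d ℓ) (k : ℤ) (x : C (k + 1)) :
    ℓ k (bdryMap κ d k x) ≤ ℓ (k + 1) x := by
  rw [bdryMap_apply, apply_castL ℓ]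
  exact h.2.2 _ x

lemma chainMap_iff_bdryMap (dC : ∀ k, C k →ₗ[κ] C (k - 1)) (dD : ∀ k, D k →ₗ[κ] D (k - 1))
    (φ : ∀ k, C k →ₗ[κ] D k) :
    (∀ k x, dD k (φ k x) = φ (k - 1) (dC k x)) ↔
      ∀ k x, bdryMap κ dD k (φ (k + 1) x) = φ k (bdryMap κ dC k x) := by
  refine ⟨fun h k x => ?_, fun h n x => ?_⟩
  · rw [bdryMap_apply, bdryMap_apply, h, map_castL]
  · obtain ⟨k, rfl⟩ : ∃ k, n = k + 1 := ⟨n - 1, by omega⟩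
    have := h k x
    rw [bdryMap_apply, bdryMap_apply, map_castL] at this
    exact castL_injective _ this

lemma homotopy_of_bdryMap (d : ∀ k, C k →ₗ[κ] C (k - 1)) (H : ∀ k, C k →ₗ[κ] C (k + 1))
    (φ : ∀ k, C k → C k)
    (h : ∀ k x, bdryMap κ d (k + 1) (H (k + 1) x) + H k (bdryMap κ d k x) = φ (k + 1) x)
    (n : ℤ) (x : C n) :
    bdryMap κ d n (H n x) + castL κ (Int.sub_add_cancel n 1) (H (n - 1) (d n x)) = φ n x := by
  obtain ⟨k, rfl⟩ : ∃ k, n = k + 1 := ⟨n - 1, by omega⟩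
  rw [← h k x, bdryMap_apply d k, map_castL_add_one]

end Boundary

section Cone

variable {κ : Type u} [Field κ] {C D : ℤ → Type v}
  [∀ k, AddCommGroup (C k)] [∀ k, Module κ (C k)]
  [∀ k, AddCommGroup (D k)] [∀ k, Module κ (D k)]
  (dC : ∀ k, C k →ₗ[κ] C (k - 1)) (ℓC : ∀ k, C k → WithBot ℝ)
  (dD : ∀ k, D k →ₗ[κ] D (k - 1)) (ℓD : ∀ k, D k → WithBot ℝ) (f : ∀ k, C k →ₗ[κ] D k)

/-- The mapping cone of `f`, with `C k × D (k + 1)` in degree `k` (the usual degree `k + 1`). -/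
def coneBdry (k : ℤ) : C (k + 1) × D (k + 1 + 1) →ₗ[κ] C k × D (k + 1) :=
  (-bdryMap κ dC k ∘ₗ LinearMap.fst κ _ _).prod
    (bdryMap κ dD (k + 1) ∘ₗ LinearMap.snd κ _ _ + f (k + 1) ∘ₗ LinearMap.fst κ _ _)

def coneFiltration (k : ℤ) (x : C k × D (k + 1)) : WithBot ℝ :=
  max (ℓC k x.1) (ℓD (k + 1) x.2)

lemma coneBdry_apply (k : ℤ) (x : C (k + 1) × D (k + 1 + 1)) :
    coneBdry dC dD f k x = (-bdryMap κ dC k x.1, bdryMap κ dD (k + 1) x.2 + f (k + 1) x.1) :=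
  rfl

variable {dC ℓC dD ℓD f}
variable (hC : IsAscendingComplex κ dC ℓC) (hD : IsAscendingComplex κ dD ℓD)
  (hf : ∀ k x, bdryMap κ dD k (f (k + 1) x) = f k (bdryMap κ dC k x))
  (hfℓ : ∀ k x, ℓD k (f k x) ≤ ℓC k x)

include hC hD

lemma isFiltrationFunction_coneFiltration (k : ℤ) :
    IsFiltrationFunction κ (coneFiltration ℓC ℓD k) :=
  (hC.2.1 k).prod (hD.2.1 (k + 1))

include hf in
lemma coneBdry_coneBdry (k : ℤ) (x : C (k + 1 + 1) × D (k + 1 + 1 + 1)) :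
    coneBdry dC dD f k (coneBdry dC dD f (k + 1) x) = 0 := by
  simp only [coneBdry_apply, map_neg, map_add, neg_neg, hf, hC.bdryMap_bdryMap,
    hD.bdryMap_bdryMap, Prod.ext_iff, Prod.fst_zero, Prod.snd_zero]
  exact ⟨trivial, by abel⟩

include hfℓ in
lemma coneFiltration_coneBdry_le (k : ℤ) (x : C (k + 1) × D (k + 1 + 1)) :
    coneFiltration ℓC ℓD k (coneBdry dC dD f k x) ≤ coneFiltration ℓC ℓD (k + 1) x := by
  simp only [coneFiltration, coneBdry_apply, (hC.2.1 k).apply_neg]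
  refine max_le (le_max_of_le_left (hC.apply_bdryMap_le k _)) ?_
  exact ((hD.2.1 _).apply_add_le _ _).trans
    (max_le (le_max_of_le_right (hD.apply_bdryMap_le _ _)) (le_max_of_le_left (hfℓ _ _)))

include hf hfℓ in
/-- Injectivity of `f` on filtered homology gives a primitive `u` of the `C`-component;
surjectivity then corrects the `D`-component. -/
lemma cone_acyclic (hfq : IsFilteredQuasiIso κ dC ℓC dD ℓD f) (t : ℝ) (k : ℤ)
    (x : C (k + 1) × D (k + 1 + 1)) (hx : coneBdry dC dD f k x = 0)
    (hxt : coneFiltration ℓC ℓD (k + 1) x ≤ t) :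
    ∃ y, coneFiltration ℓC ℓD (k + 1 + 1) y ≤ t ∧ coneBdry dC dD f (k + 1) y = x := by
  obtain ⟨a, b⟩ := x
  simp only [coneBdry_apply, Prod.ext_iff, Prod.fst_zero, Prod.snd_zero, neg_eq_zero] at hx
  obtain ⟨ha, hab⟩ := hx
  obtain ⟨hat, hbt⟩ := max_le_iff.mp hxt
  obtain ⟨u, hut, hua⟩ := (hfq t (k + 1)).2 a ((bdryMap_eq_zero_iff _ _ _).mp ha) hat
    ⟨-b, by rwa [(hD.2.1 _).apply_neg], by rw [map_neg, neg_eq_iff_add_eq_zero, hab]⟩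
  have hc : bdryMap κ dD (k + 1) (b + f (k + 1 + 1) u) = 0 := by rw [map_add, hf, hua, hab]
  obtain ⟨x₀, hx₀, hx₀t, z, hzt, hz⟩ := (hfq t (k + 1 + 1)).1 (b + f (k + 1 + 1) u)
    ((bdryMap_eq_zero_iff _ _ _).mp hc)
    (((hD.2.1 _).apply_add_le _ _).trans (max_le hbt ((hfℓ _ _).trans hut)))
  refine ⟨(x₀ - u, z), max_le (((hC.2.1 _).apply_sub_le _ _).trans (max_le hx₀t hut)) hzt, ?_⟩
  have hx₀' : bdryMap κ dC (k + 1) x₀ = 0 := (bdryMap_eq_zero_iff _ _ _).mpr hx₀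
  rw [coneBdry_apply, map_sub, map_sub, hx₀', hua, hz]
  exact Prod.ext (by simp) (by simp)

include hf hfℓ in
theorem exists_cone_contraction (hCneg : ∀ n : ℤ, n < 0 → ∀ x : C n, x = 0)
    (hDneg : ∀ n : ℤ, n < 0 → ∀ x : D n, x = 0)
    (hCbasis : ∀ n : ℤ, ∃ S : Set (C n), IsOrthogonal κ (ℓC n) S ∧
      LinearIndependent κ (fun x : S => (x : C n)) ∧ Submodule.span κ S = ⊤)
    (hDbasis : ∀ n : ℤ, ∃ S : Set (D n), IsOrthogonal κ (ℓD n) S ∧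
      LinearIndependent κ (fun x : S => (x : D n)) ∧ Submodule.span κ S = ⊤)
    (hfq : IsFilteredQuasiIso κ dC ℓC dD ℓD f) :
    ∃ s : ∀ k, C k × D (k + 1) →ₗ[κ] C (k + 1) × D (k + 1 + 1),
      (∀ k x, coneFiltration ℓC ℓD (k + 1) (s k x) ≤ coneFiltration ℓC ℓD k x) ∧
      ∀ k x, coneBdry dC dD f (k + 1) (s (k + 1) x) + s k (coneBdry dC dD f k x) = x := by
  refine exists_filtered_contraction (E := fun k => C k × D (k + 1)) (d := coneBdry dC dD f)
    (ℓ := coneFiltration ℓC ℓD) (isFiltrationFunction_coneFiltration hC hD)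
    (coneBdry_coneBdry hC hD hf) (coneFiltration_coneBdry_le hC hD hfℓ)
    (cone_acyclic hC hD hf hfℓ hfq) (fun k => ?_) (-1)
    fun k hk x => Prod.ext (hCneg k (by omega) _) (hDneg (k + 1) (by omega) _)
  obtain ⟨S, hS, hSli, hSspan⟩ := hCbasis k
  obtain ⟨T, hT, hTli, hTspan⟩ := hDbasis (k + 1)
  exact ⟨S ⊕ T, _, (hS.isOrthogonalBasis hSli hSspan).prod (hT.isOrthogonalBasis hTli hTspan)
    (hC.2.1 k).apply_zero (hD.2.1 _).apply_zero⟩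

end Cone

section ConeContraction

variable {κ : Type u} [Field κ] {C D : ℤ → Type v}
  [∀ k, AddCommGroup (C k)] [∀ k, Module κ (C k)]
  [∀ k, AddCommGroup (D k)] [∀ k, Module κ (D k)]
  (s : ∀ k, C k × D (k + 1) →ₗ[κ] C (k + 1) × D (k + 1 + 1))

/-- `D n` is a summand of the cone in degree `n - 1`, hence the transport; use
`coneContractionInr_succ`. -/
def coneContractionInr (n : ℤ) : D n →ₗ[κ] C n × D (n + 1) :=
  ((castL κ (Int.sub_add_cancel n 1)).prodMap
      (castL κ (congrArg (· + 1) (Int.sub_add_cancel n 1)))) ∘ₗ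
    s (n - 1) ∘ₗ LinearMap.inr κ _ _ ∘ₗ castL κ (Int.sub_add_cancel n 1).symm

def coneHomotopyInverse (n : ℤ) : D n →ₗ[κ] C n :=
  LinearMap.fst κ _ _ ∘ₗ coneContractionInr s n

def coneHomotopyC (n : ℤ) : C n →ₗ[κ] C (n + 1) :=
  LinearMap.fst κ _ _ ∘ₗ s n ∘ₗ LinearMap.inl κ _ _

def coneHomotopyD (n : ℤ) : D n →ₗ[κ] D (n + 1) :=
  -(LinearMap.snd κ _ _ ∘ₗ coneContractionInr s n)

lemma coneContractionInr_succ (k : ℤ) (y : D (k + 1)) :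
    coneContractionInr s (k + 1) y = s k (0, y) := by
  have key : ∀ m (hm : m = k),
      ((castL κ (show m + 1 = k + 1 by omega)).prodMap
        (castL κ (show m + 1 + 1 = k + 1 + 1 by omega))) (s m (0, castL κ (by omega) y)) =
      s k (0, y) := by
    rintro m rfl; rfl
  exact key (k + 1 - 1) (by omega)

lemma coneHomotopyInverse_succ (k : ℤ) (y : D (k + 1)) :
    coneHomotopyInverse s (k + 1) y = (s k (0, y)).1 := by
  simp [coneHomotopyInverse, coneContractionInr_succ]

lemma coneHomotopyD_succ (k : ℤ) (y : D (k + 1)) :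
    coneHomotopyD s (k + 1) y = -(s k (0, y)).2 := by
  simp [coneHomotopyD, coneContractionInr_succ]

variable {dC : ∀ k, C k →ₗ[κ] C (k - 1)} {ℓC : ∀ k, C k → WithBot ℝ}
  {dD : ∀ k, D k →ₗ[κ] D (k - 1)} {ℓD : ∀ k, D k → WithBot ℝ} {f : ∀ k, C k →ₗ[κ] D k}
  {s}

section Filtered

variable (hC : ∀ k, IsFiltrationFunction κ (ℓC k)) (hD : ∀ k, IsFiltrationFunction κ (ℓD k))
  (hsℓ : ∀ k x, coneFiltration ℓC ℓD (k + 1) (s k x) ≤ coneFiltration ℓC ℓD k x)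
include hsℓ

include hC in
lemma apply_coneHomotopyInverse_le (n : ℤ) (y : D n) :
    ℓC n (coneHomotopyInverse s n y) ≤ ℓD n y := by
  obtain ⟨k, rfl⟩ : ∃ k, n = k + 1 := ⟨n - 1, by omega⟩
  rw [coneHomotopyInverse_succ]
  refine (le_max_left _ _).trans ((hsℓ k (0, y)).trans ?_)
  simp [coneFiltration, (hC k).apply_zero]

include hD in
lemma apply_coneHomotopyC_le (n : ℤ) (x : C n) : ℓC (n + 1) (coneHomotopyC s n x) ≤ ℓC n x := by
  refine (le_max_left _ _).trans ((hsℓ n (x, 0)).trans ?_)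
  simp [coneFiltration, (hD (n + 1)).apply_zero]

include hC hD in
lemma apply_coneHomotopyD_le (n : ℤ) (y : D n) :
    ℓD (n + 1) (coneHomotopyD s n y) ≤ ℓD n y := by
  obtain ⟨k, rfl⟩ : ∃ k, n = k + 1 := ⟨n - 1, by omega⟩
  rw [coneHomotopyD_succ, (hD _).apply_neg]
  refine (le_max_right _ _).trans ((hsℓ k (0, y)).trans ?_)
  simp [coneFiltration, (hC k).apply_zero]

end Filtered

variable (hs : ∀ k x, coneBdry dC dD f (k + 1) (s (k + 1) x) + s k (coneBdry dC dD f k x) = x)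
include hs

lemma coneHomotopyInverse_bdryMap (k : ℤ) (y : D (k + 1)) :
    bdryMap κ dC k (coneHomotopyInverse s (k + 1) y) =
      coneHomotopyInverse s k (bdryMap κ dD k y) := by
  obtain ⟨m, rfl⟩ : ∃ m, k = m + 1 := ⟨k - 1, by omega⟩
  have h := congrArg Prod.fst (hs m (0, y))
  simp only [coneBdry_apply, map_zero, neg_zero, add_zero, Prod.fst_add, neg_add_eq_zero] at h
  rw [coneHomotopyInverse_succ, coneHomotopyInverse_succ, h]

lemma coneHomotopyC_spec (k : ℤ) (x : C (k + 1)) :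
    bdryMap κ dC (k + 1) (coneHomotopyC s (k + 1) x) + coneHomotopyC s k (bdryMap κ dC k x) =
      coneHomotopyInverse s (k + 1) (f (k + 1) x) - x := by
  have hsplit : coneBdry dC dD f k (x, 0) = -(bdryMap κ dC k x, 0) + (0, f (k + 1) x) := by
    simp [coneBdry_apply]
  have h := congrArg Prod.fst (hs k (x, 0))
  rw [hsplit, map_add, map_neg] at h
  simp only [coneBdry_apply, Prod.fst_add, Prod.fst_neg] at h
  simp only [coneHomotopyC, coneHomotopyInverse_succ, LinearMap.comp_apply, LinearMap.inl_apply,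
    LinearMap.fst_apply]
  linear_combination (norm := abel) -h

lemma coneHomotopyD_spec (k : ℤ) (y : D (k + 1)) :
    bdryMap κ dD (k + 1) (coneHomotopyD s (k + 1) y) + coneHomotopyD s k (bdryMap κ dD k y) =
      f (k + 1) (coneHomotopyInverse s (k + 1) y) - y := by
  obtain ⟨m, rfl⟩ : ∃ m, k = m + 1 := ⟨k - 1, by omega⟩
  have h := congrArg Prod.snd (hs m (0, y))
  simp only [coneBdry_apply, map_zero, neg_zero, add_zero, Prod.snd_add] at h
  rw [coneHomotopyD_succ, coneHomotopyD_succ, coneHomotopyInverse_succ, map_neg]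
  linear_combination (norm := abel) -h

end ConeContraction

/-- Every filtered quasi-isomorphism between nonnegatively supported ascending chain
complexes admitting orthogonal bases is a filtered homotopy equivalence. -/
theorem filtered_quasiIso_is_filtered_homotopy_equivalence (κ : Type u) [Field κ]
    {C D : ℤ → Type v}
    [∀ k, AddCommGroup (C k)] [∀ k, Module κ (C k)]
    [∀ k, AddCommGroup (D k)] [∀ k, Module κ (D k)]
    (dC : ∀ k : ℤ, C k →ₗ[κ] C (k - 1)) (ℓC : ∀ k : ℤ, C k → WithBot ℝ)
    (dD : ∀ k : ℤ, D k →ₗ[κ] D (k - 1)) (ℓD : ∀ k : ℤ, D k → WithBot ℝ)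
    (hC : IsAscendingComplex κ dC ℓC) (hD : IsAscendingComplex κ dD ℓD)
    (hCneg : ∀ n : ℤ, n < 0 → ∀ x : C n, x = 0)
    (hDneg : ∀ n : ℤ, n < 0 → ∀ x : D n, x = 0)
    (hCbasis : ∀ n : ℤ, ∃ S : Set (C n), IsOrthogonal κ (ℓC n) S ∧
      LinearIndependent κ (fun x : S => (x : C n)) ∧ Submodule.span κ S = ⊤)
    (hDbasis : ∀ n : ℤ, ∃ S : Set (D n), IsOrthogonal κ (ℓD n) S ∧
      LinearIndependent κ (fun x : S => (x : D n)) ∧ Submodule.span κ S = ⊤)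
    (f : ∀ n : ℤ, C n →ₗ[κ] D n)
    (hfchain : ∀ (n : ℤ) (x : C n), dD n (f n x) = f (n - 1) (dC n x))
    (hffilt : ∀ (n : ℤ) (x : C n), ℓD n (f n x) ≤ ℓC n x)
    (hfq : IsFilteredQuasiIso κ dC ℓC dD ℓD f) :
    ∃ g : ∀ n : ℤ, D n →ₗ[κ] C n,
      (∀ (n : ℤ) (x : D n), dC n (g n x) = g (n - 1) (dD n x)) ∧
      (∀ (n : ℤ) (x : D n), ℓC n (g n x) ≤ ℓD n x) ∧
      (∃ K : ∀ n : ℤ, C n →ₗ[κ] C (n + 1),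
        (∀ (n : ℤ) (x : C n), ℓC (n + 1) (K n x) ≤ ℓC n x) ∧
        ∀ (n : ℤ) (x : C n),
          bdryMap κ dC n (K n x) +
              castL κ (show n - 1 + 1 = n by omega) (K (n - 1) (dC n x)) =
            g n (f n x) - x) ∧
      ∃ L : ∀ n : ℤ, D n →ₗ[κ] D (n + 1),
        (∀ (n : ℤ) (x : D n), ℓD (n + 1) (L n x) ≤ ℓD n x) ∧
        ∀ (n : ℤ) (x : D n),
          bdryMap κ dD n (L n x) +
              castL κ (show n - 1 + 1 = n by omega) (L (n - 1) (dD n x)) =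
            f n (g n x) - x := by
  have hf := (chainMap_iff_bdryMap dC dD f).mp hfchain
  obtain ⟨s, hsℓ, hs⟩ :=
    exists_cone_contraction hC hD hf hffilt hCneg hDneg hCbasis hDbasis hfq
  refine ⟨coneHomotopyInverse s,
    (chainMap_iff_bdryMap dD dC _).mpr (coneHomotopyInverse_bdryMap hs),
    apply_coneHomotopyInverse_le hC.2.1 hsℓ,
    ⟨coneHomotopyC s, apply_coneHomotopyC_le hD.2.1 hsℓ,
      homotopy_of_bdryMap dC _ (fun n x => coneHomotopyInverse s n (f n x) - x)
        (coneHomotopyC_spec hs)⟩,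
    ⟨coneHomotopyD s, apply_coneHomotopyD_le hC.2.1 hD.2.1 hsℓ,
      homotopy_of_bdryMap dD _ (fun n y => f n (coneHomotopyInverse s n y) - y)
        (coneHomotopyD_spec hs)⟩⟩
end

section
/- Fix Λ > 0, the strip M with partial order ⪯, the glide-reflection T, a strictly increasing bijection φ : ℝ → (−Λ, Λ), the flow (T_M)_ε on M, and the interleaving distance d on M, all as defined. Let v ∈ M ∖ ∂M and 0 < ε < ∞. Then there exists w ∈ ∂M such that d(v, w) < ε if and only if it is not the case that (T_M)_{2ε}(v) ⪯ T(v). -/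
open scoped ENNReal

noncomputable section

/-- The strip `M = {(x, y) : -2Λ ≤ x + y ≤ 2Λ}`. -/
def Mstrip (Λ : ℝ) : Set (ℝ × ℝ) :=
  {p | -(2 * Λ) ≤ p.1 + p.2 ∧ p.1 + p.2 ≤ 2 * Λ}

/-- The boundary `∂M = {(x, y) ∈ M : |x + y| = 2Λ}`. -/
def bdryM (Λ : ℝ) : Set (ℝ × ℝ) :=
  {p | p ∈ Mstrip Λ ∧ |p.1 + p.2| = 2 * Λ}

/-- The partial order on `M`: `(x, y) ⪯ (x', y')` iff `x ≥ x'` and `y ≤ y'`. -/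
def Mle (p q : ℝ × ℝ) : Prop := q.1 ≤ p.1 ∧ p.2 ≤ q.2

/-- The glide reflection `T (x, y) = (-2Λ - y, 2Λ - x)`, as a permutation of the plane. -/
def Tmap (Λ : ℝ) : Equiv.Perm (ℝ × ℝ) where
  toFun p := (-(2 * Λ) - p.2, 2 * Λ - p.1)
  invFun p := (2 * Λ - p.2, -(2 * Λ) - p.1)
  left_inv := by
    rintro ⟨a, b⟩
    simp only [Prod.mk.injEq]
    constructor <;> ring
  right_inv := by
    rintro ⟨a, b⟩
    simp only [Prod.mk.injEq]
    constructor <;> ring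

/-- The half-open square `S = (-Λ, Λ] × [-Λ, Λ)`. -/
def Sset (Λ : ℝ) : Set (ℝ × ℝ) :=
  {p | -Λ < p.1 ∧ p.1 ≤ Λ ∧ -Λ ≤ p.2 ∧ p.2 < Λ}

/-- The region `L = {(x, y) ∈ M : x ≤ -Λ, y < Λ}`. -/
def Lset (Λ : ℝ) : Set (ℝ × ℝ) :=
  {p | p ∈ Mstrip Λ ∧ p.1 ≤ -Λ ∧ p.2 < Λ}

/-- The region `A = {(x, y) ∈ M : x > -Λ, y ≥ Λ}`. -/
def Aset (Λ : ℝ) : Set (ℝ × ℝ) :=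
  {p | p ∈ Mstrip Λ ∧ -Λ < p.1 ∧ Λ ≤ p.2}

/-- The open square `S° = (-Λ, Λ) × (-Λ, Λ)`. -/
def SsetInt (Λ : ℝ) : Set (ℝ × ℝ) :=
  {p | -Λ < p.1 ∧ p.1 < Λ ∧ -Λ < p.2 ∧ p.2 < Λ}

/-- The open region `L° = {(x, y) : x + y > -2Λ, x < -Λ, y < Λ}`. -/
def LsetInt (Λ : ℝ) : Set (ℝ × ℝ) :=
  {p | -(2 * Λ) < p.1 + p.2 ∧ p.1 < -Λ ∧ p.2 < Λ}

/-- The open region `A° = {(x, y) : x + y < 2Λ, x > -Λ, y > Λ}`. -/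
def AsetInt (Λ : ℝ) : Set (ℝ × ℝ) :=
  {p | p.1 + p.2 < 2 * Λ ∧ -Λ < p.1 ∧ Λ < p.2}

/-- The `truncated translations` `ρ_s` of `[-Λ, Λ]` determined by a strictly increasing
bijection `φ : ℝ → (-Λ, Λ)`: `ρ_s t = φ (s + φ⁻¹ t)` for `t ∈ (-Λ, Λ)`, and
`ρ_s (±Λ) = ±Λ`. -/
def rhoFlow (Λ : ℝ) (φ : ℝ → ℝ) (s t : ℝ) : ℝ :=
  if t ≤ -Λ then -Λ else if Λ ≤ t then Λ else φ (s + Function.invFun φ t)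

/-- The interleaving distance on `M` associated to a flow:
`d (v, w) = inf {ε > 0 : v ⪯ flow ε w and w ⪯ flow ε v}` (with `inf ∅ = ∞`). -/
def dInt (flow : ℝ → ℝ × ℝ → ℝ × ℝ) (v w : ℝ × ℝ) : ℝ≥0∞ :=
  sInf {e : ℝ≥0∞ | ∃ ε : ℝ, 0 < ε ∧ e = ENNReal.ofReal ε ∧
    Mle v (flow ε w) ∧ Mle w (flow ε v)}

/-!
Conjugating by a power of `T`, which preserves `⪯` and `∂M` and commutes with the flow, reduces
the claim to `v` in the fundamental domain `𝔇 = S ∪ L ∪ A`. The flow maps each boundary line to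
itself, fixing the points whose coordinates are odd multiples of `Λ` and moving any other point
only towards the next fixed point. Hence a boundary point interleaved with `v` lies on an edge of
`𝔇`: there is none for `v ∈ S`, it is on the lower edge `(-2Λ - c, c)` of `L` for `v ∈ L`, and on
the upper edge `(a, 2Λ - a)` of `A` for `v ∈ A`. On these edges the flow is the truncated
translation `ρ`. For `v = (x, y) ∈ L` this turns `δ`-interleaving with `∂M` into
`y ≤ ρ_{2δ} (-2Λ - x)` (with witness `c = ρ_δ (-2Λ - x)`), and as `ρ_s = φ ∘ (s + ·) ∘ φ⁻¹` is
strictly increasing in `s`, some `δ < ε` works iff `y < ρ_{2ε} (-2Λ - x)`, which is the failure of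
`(T_M)_{2ε} v ⪯ T v`. The case `v ∈ A` is the mirror image, and for `v ∈ S` both sides are false.
-/

lemma Equiv.Perm.zpow_apply_rel_iff {α : Type*} {f : Equiv.Perm α} {r : α → α → Prop}
    (h : ∀ a b, r (f a) (f b) ↔ r a b) (k : ℤ) (a b : α) :
    r ((f ^ k) a) ((f ^ k) b) ↔ r a b := by
  induction k using Int.induction_on generalizing a b with
  | zero => rfl
  | succ k ih => rw [zpow_add_one, Equiv.Perm.mul_apply, Equiv.Perm.mul_apply, ih, h]
  | pred k ih =>
    rw [zpow_sub_one, Equiv.Perm.mul_apply, Equiv.Perm.mul_apply, ih, ← h]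
    simp only [Equiv.Perm.coe_inv, Equiv.apply_symm_apply]

lemma mul_intCast_le_neg {a : ℝ} (ha : 0 < a) {m : ℤ} (h : a * m < 0) : a * m ≤ -a := by
  have hm : m < 0 := by exact_mod_cast neg_of_mul_neg_right h ha.le
  have hm' : (m : ℝ) ≤ -1 := by exact_mod_cast Int.le_sub_one_of_lt hm
  nlinarith

section Glide

variable {Λ : ℝ}

lemma Tmap_apply (p : ℝ × ℝ) : Tmap Λ p = (-(2 * Λ) - p.2, 2 * Λ - p.1) := rfl

lemma Tmap_inv_apply (p : ℝ × ℝ) : (Tmap Λ)⁻¹ p = (2 * Λ - p.2, -(2 * Λ) - p.1) := rfl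

lemma Tmap_zpow_two_mul_apply (m : ℤ) (p : ℝ × ℝ) :
    (Tmap Λ ^ (2 * m)) p = (p.1 - 4 * Λ * m, p.2 + 4 * Λ * m) := by
  rw [zpow_mul]
  induction m using Int.induction_on generalizing p with
  | zero => simp
  | succ m ih =>
    rw [zpow_add_one, Equiv.Perm.mul_apply, ih]
    simp only [zpow_two, Equiv.Perm.mul_apply, Tmap_apply, Prod.mk.injEq]
    push_cast
    constructor <;> ring
  | pred m ih =>
    rw [zpow_sub_one, Equiv.Perm.mul_apply, ih]
    simp only [zpow_two, mul_inv_rev, Equiv.Perm.mul_apply, Tmap_inv_apply, Prod.mk.injEq]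
    push_cast
    constructor <;> ring

lemma Tmap_zpow_apply_comm (k : ℤ) (p : ℝ × ℝ) :
    Tmap Λ ((Tmap Λ ^ k) p) = (Tmap Λ ^ k) (Tmap Λ p) := by
  rw [← Equiv.Perm.mul_apply, (Commute.self_zpow _ k).eq, Equiv.Perm.mul_apply]

lemma Mle_zpow_iff (k : ℤ) (p q : ℝ × ℝ) :
    Mle ((Tmap Λ ^ k) p) ((Tmap Λ ^ k) q) ↔ Mle p q :=
  Equiv.Perm.zpow_apply_rel_iff
    (fun _ _ => by simp only [Mle, Tmap_apply, sub_le_sub_iff_left]; exact and_comm) k p q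

lemma zpow_mem_bdryM_iff (k : ℤ) (p : ℝ × ℝ) : (Tmap Λ ^ k) p ∈ bdryM Λ ↔ p ∈ bdryM Λ := by
  refine Equiv.Perm.zpow_apply_rel_iff (r := fun p _ => p ∈ bdryM Λ) (fun a _ => ?_) k p p
  have hsum : (Tmap Λ a).1 + (Tmap Λ a).2 = -(a.1 + a.2) := by simp only [Tmap_apply]; ring
  simp only [bdryM, Mstrip, Set.mem_ofPred_eq, hsum, abs_neg]
  constructor <;> rintro ⟨⟨h1, h2⟩, h3⟩ <;> exact ⟨⟨by linarith, by linarith⟩, h3⟩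

lemma add_eq_or_of_mem_bdryM (hΛ : 0 < Λ) {p : ℝ × ℝ} (hp : p ∈ bdryM Λ) :
    p.1 + p.2 = 2 * Λ ∨ p.1 + p.2 = -(2 * Λ) :=
  (abs_eq (by positivity)).1 hp.2

lemma mem_bdryM_of_add_eq (hΛ : 0 < Λ) {p : ℝ × ℝ} (hp : p.1 + p.2 = 2 * Λ ∨ p.1 + p.2 = -(2 * Λ)) :
    p ∈ bdryM Λ := by
  refine ⟨⟨?_, ?_⟩, (abs_eq (by positivity)).2 hp⟩ <;> rcases hp with hp | hp <;> linarith

end Glide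

section Decomposition

variable {Λ : ℝ}

def fundDomain (Λ : ℝ) : Set (ℝ × ℝ) := Sset Λ ∪ Lset Λ ∪ Aset Λ

lemma exists_eq_zpow_mem_fundDomain_of_mem_Ico {p : ℝ × ℝ} (hp : p ∈ Mstrip Λ)
    (h1 : -Λ ≤ p.2) (h2 : p.2 < 3 * Λ) :
    ∃ (k : ℤ) (q : ℝ × ℝ), q ∈ fundDomain Λ ∧ p = (Tmap Λ ^ k) q := by
  obtain ⟨hM1, hM2⟩ := hp
  rcases lt_or_ge p.2 Λ with hy | hy <;> rcases lt_or_ge Λ p.1 with hx | hx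
  · refine ⟨-1, Tmap Λ p, Or.inl (Or.inr ⟨⟨?_, ?_⟩, ?_, ?_⟩), by simp⟩ <;>
      simp only [Tmap_apply] <;> linarith
  · rcases lt_or_ge (-Λ) p.1 with hx' | hx'
    · exact ⟨0, p, Or.inl (Or.inl ⟨hx', hx, h1, hy⟩), by simp⟩
    · exact ⟨0, p, Or.inl (Or.inr ⟨⟨hM1, hM2⟩, hx', hy⟩), by simp⟩
  · exact ⟨0, p, Or.inr ⟨⟨hM1, hM2⟩, by linarith, hy⟩, by simp⟩
  · rcases lt_or_ge (-Λ) p.1 with hx' | hx'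
    · exact ⟨0, p, Or.inr ⟨⟨hM1, hM2⟩, hx', hy⟩, by simp⟩
    refine ⟨1, (Tmap Λ)⁻¹ p, ?_, by simp⟩
    rcases lt_or_ge (-(2 * Λ) - p.1) Λ with hx'' | hx''
    · refine Or.inl (Or.inl ⟨?_, ?_, ?_, ?_⟩) <;> simp only [Tmap_inv_apply] <;> linarith
    · refine Or.inr ⟨⟨?_, ?_⟩, ?_, ?_⟩ <;> simp only [Tmap_inv_apply] <;> linarith

lemma exists_eq_zpow_two_mul_snd_mem_Ico (hΛ : 0 < Λ) (p : ℝ × ℝ) :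
    ∃ (m : ℤ) (p₀ : ℝ × ℝ), p = (Tmap Λ ^ (2 * m)) p₀ ∧ -Λ ≤ p₀.2 ∧ p₀.2 < 3 * Λ := by
  obtain ⟨m, ⟨h1, h2⟩, -⟩ := existsUnique_sub_zsmul_mem_Ico (by positivity : 0 < 4 * Λ) p.2 (-Λ)
  rw [zsmul_eq_mul] at h1 h2
  refine ⟨m, (p.1 + 4 * Λ * m, p.2 - 4 * Λ * m), ?_, by linarith, by linarith⟩
  rw [Tmap_zpow_two_mul_apply]
  ext <;> simp

lemma exists_eq_zpow_two_mul_fst_mem_Ioc (hΛ : 0 < Λ) (p : ℝ × ℝ) :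
    ∃ (m : ℤ) (p₀ : ℝ × ℝ), p = (Tmap Λ ^ (2 * m)) p₀ ∧ -(3 * Λ) < p₀.1 ∧ p₀.1 ≤ Λ := by
  obtain ⟨n, ⟨h1, h2⟩, -⟩ :=
    existsUnique_sub_zsmul_mem_Ioc (by positivity : 0 < 4 * Λ) p.1 (-(3 * Λ))
  rw [zsmul_eq_mul] at h1 h2
  refine ⟨-n, (p.1 - 4 * Λ * n, p.2 + 4 * Λ * n), ?_, by linarith, by linarith⟩
  rw [Tmap_zpow_two_mul_apply]
  ext <;> simp

lemma mem_Mstrip_of_mem_fundDomain {p : ℝ × ℝ} (hp : p ∈ fundDomain Λ) : p ∈ Mstrip Λ := by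
  rcases hp with (⟨h1, h2, h3, h4⟩ | hp) | hp
  · constructor <;> linarith
  · exact hp.1
  · exact hp.1

lemma exists_eq_zpow_mem_fundDomain (hΛ : 0 < Λ) {p : ℝ × ℝ} (hp : p ∈ Mstrip Λ) :
    ∃ (k : ℤ) (q : ℝ × ℝ), q ∈ fundDomain Λ ∧ p = (Tmap Λ ^ k) q := by
  obtain ⟨m, p₀, rfl, h1, h2⟩ := exists_eq_zpow_two_mul_snd_mem_Ico hΛ p
  have hp₀ : p₀ ∈ Mstrip Λ := by
    rw [Tmap_zpow_two_mul_apply] at hp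
    obtain ⟨hM1, hM2⟩ := hp
    constructor <;> dsimp only at hM1 hM2 <;> linarith
  obtain ⟨k, q, hq, rfl⟩ := exists_eq_zpow_mem_fundDomain_of_mem_Ico hp₀ h1 h2
  exact ⟨2 * m + k, q, hq, by rw [zpow_add, Equiv.Perm.mul_apply]⟩

end Decomposition

section Rho

variable {Λ : ℝ} {φ : ℝ → ℝ}

lemma rhoFlow_of_le {t : ℝ} (ht : t ≤ -Λ) (s : ℝ) : rhoFlow Λ φ s t = -Λ := if_pos ht

lemma rhoFlow_of_ge (hΛ : 0 < Λ) {t : ℝ} (ht : Λ ≤ t) (s : ℝ) : rhoFlow Λ φ s t = Λ := by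
  rw [rhoFlow, if_neg (by linarith), if_pos ht]

lemma phi_mem_Ioo (hφr : Set.range φ = Set.Ioo (-Λ) Λ) (r : ℝ) : φ r ∈ Set.Ioo (-Λ) Λ :=
  hφr ▸ Set.mem_range_self r

lemma rhoFlow_phi (hφ : StrictMono φ) (hφr : Set.range φ = Set.Ioo (-Λ) Λ) (s r : ℝ) :
    rhoFlow Λ φ s (φ r) = φ (s + r) := by
  have h := phi_mem_Ioo hφr r
  rw [rhoFlow, if_neg h.1.not_ge, if_neg h.2.not_ge, Function.leftInverse_invFun hφ.injective r]

lemma neg_le_rhoFlow (hΛ : 0 < Λ) (hφr : Set.range φ = Set.Ioo (-Λ) Λ) (s t : ℝ) :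
    -Λ ≤ rhoFlow Λ φ s t := by
  unfold rhoFlow
  split_ifs
  · exact le_rfl
  · linarith
  · exact (phi_mem_Ioo hφr _).1.le

lemma rhoFlow_le (hΛ : 0 < Λ) (hφr : Set.range φ = Set.Ioo (-Λ) Λ) (s t : ℝ) :
    rhoFlow Λ φ s t ≤ Λ := by
  unfold rhoFlow
  split_ifs
  · linarith
  · exact le_rfl
  · exact (phi_mem_Ioo hφr _).2.le

lemma neg_lt_rhoFlow (hΛ : 0 < Λ) (hφr : Set.range φ = Set.Ioo (-Λ) Λ) {t : ℝ} (ht : -Λ < t)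
    (s : ℝ) : -Λ < rhoFlow Λ φ s t := by
  unfold rhoFlow
  split_ifs
  · linarith
  · linarith
  · exact (phi_mem_Ioo hφr _).1

lemma rhoFlow_lt (hΛ : 0 < Λ) (hφr : Set.range φ = Set.Ioo (-Λ) Λ) {t : ℝ} (ht : t < Λ)
    (s : ℝ) : rhoFlow Λ φ s t < Λ := by
  unfold rhoFlow
  split_ifs
  · linarith
  · linarith
  · exact (phi_mem_Ioo hφr _).2

lemma rhoFlow_monotone (hΛ : 0 < Λ) (hφ : StrictMono φ) (hφr : Set.range φ = Set.Ioo (-Λ) Λ)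
    (s : ℝ) : Monotone (rhoFlow Λ φ s) := by
  intro a b hab
  rcases le_or_gt a (-Λ) with ha | ha
  · rw [rhoFlow_of_le ha]
    exact neg_le_rhoFlow hΛ hφr s b
  rcases le_or_gt Λ b with hb | hb
  · rw [rhoFlow_of_ge hΛ hb]
    exact rhoFlow_le hΛ hφr s a
  obtain ⟨r, rfl⟩ : a ∈ Set.range φ := hφr ▸ ⟨ha, hab.trans_lt hb⟩
  obtain ⟨r', rfl⟩ : b ∈ Set.range φ := hφr ▸ ⟨ha.trans_le hab, hb⟩
  rw [rhoFlow_phi hφ hφr, rhoFlow_phi hφ hφr]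
  exact hφ.monotone (by linarith [hφ.le_iff_le.1 hab])

lemma rhoFlow_rhoFlow (hΛ : 0 < Λ) (hφ : StrictMono φ) (hφr : Set.range φ = Set.Ioo (-Λ) Λ)
    (s s' t : ℝ) : rhoFlow Λ φ s (rhoFlow Λ φ s' t) = rhoFlow Λ φ (s + s') t := by
  rcases le_or_gt t (-Λ) with ht | ht
  · rw [rhoFlow_of_le ht, rhoFlow_of_le le_rfl, rhoFlow_of_le ht]
  rcases le_or_gt Λ t with ht' | ht'
  · rw [rhoFlow_of_ge hΛ ht', rhoFlow_of_ge hΛ le_rfl, rhoFlow_of_ge hΛ ht']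
  obtain ⟨r, rfl⟩ : t ∈ Set.range φ := hφr ▸ ⟨ht, ht'⟩
  rw [rhoFlow_phi hφ hφr, rhoFlow_phi hφ hφr, rhoFlow_phi hφ hφr, add_assoc]

lemma self_le_rhoFlow (hΛ : 0 < Λ) (hφ : StrictMono φ) (hφr : Set.range φ = Set.Ioo (-Λ) Λ)
    {s t : ℝ} (hs : 0 ≤ s) (ht : t ≤ Λ) : t ≤ rhoFlow Λ φ s t := by
  rcases le_or_gt t (-Λ) with ht' | ht'
  · rw [rhoFlow_of_le ht']
    exact ht'
  rcases ht.eq_or_lt with rfl | ht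
  · rw [rhoFlow_of_ge hΛ le_rfl]
  obtain ⟨r, rfl⟩ : t ∈ Set.range φ := hφr ▸ ⟨ht', ht⟩
  rw [rhoFlow_phi hφ hφr]
  exact hφ.monotone (by linarith)

lemma rhoFlow_le_self (hΛ : 0 < Λ) (hφ : StrictMono φ) (hφr : Set.range φ = Set.Ioo (-Λ) Λ)
    {s t : ℝ} (hs : s ≤ 0) (ht : -Λ ≤ t) : rhoFlow Λ φ s t ≤ t := by
  rcases le_or_gt Λ t with ht' | ht'
  · rw [rhoFlow_of_ge hΛ ht']
    exact ht'
  rcases ht.eq_or_lt with rfl | ht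
  · rw [rhoFlow_of_le le_rfl]
  obtain ⟨r, rfl⟩ : t ∈ Set.range φ := hφr ▸ ⟨ht, ht'⟩
  rw [rhoFlow_phi hφ hφr]
  exact hφ.monotone (by linarith)

lemma mem_Ioo_of_le_rhoFlow (hΛ : 0 < Λ) (hφr : Set.range φ = Set.Ioo (-Λ) Λ) {s t y : ℝ}
    (ht : -Λ ≤ t) (hty : t < y) (hy : y ≤ rhoFlow Λ φ s t) : t ∈ Set.Ioo (-Λ) Λ := by
  refine ⟨ht.lt_of_ne ?_, hty.trans_le (hy.trans (rhoFlow_le hΛ hφr s t))⟩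
  rintro rfl
  rw [rhoFlow_of_le le_rfl] at hy
  linarith

lemma mem_Ioo_of_rhoFlow_le (hΛ : 0 < Λ) (hφr : Set.range φ = Set.Ioo (-Λ) Λ) {s t x : ℝ}
    (ht : t ≤ Λ) (hxt : x < t) (hx : rhoFlow Λ φ s t ≤ x) : t ∈ Set.Ioo (-Λ) Λ := by
  refine ⟨((neg_le_rhoFlow hΛ hφr s t).trans hx).trans_lt hxt, ht.lt_of_ne ?_⟩
  rintro rfl
  rw [rhoFlow_of_ge hΛ le_rfl] at hx
  linarith

lemma exists_le_rhoFlow_two_mul_iff (hΛ : 0 < Λ) (hφ : StrictMono φ)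
    (hφr : Set.range φ = Set.Ioo (-Λ) Λ) {ε t y : ℝ} (ht : -Λ ≤ t) (hty : t < y) :
    (∃ δ, 0 < δ ∧ δ < ε ∧ y ≤ rhoFlow Λ φ (2 * δ) t) ↔ y < rhoFlow Λ φ (2 * ε) t := by
  constructor
  · rintro ⟨δ, -, hδε, hy⟩
    obtain ⟨r, rfl⟩ : t ∈ Set.range φ := hφr ▸ mem_Ioo_of_le_rhoFlow hΛ hφr ht hty hy
    rw [rhoFlow_phi hφ hφr] at hy ⊢
    exact hy.trans_lt (hφ (by linarith))
  · intro hy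
    obtain ⟨r, rfl⟩ : t ∈ Set.range φ := hφr ▸ mem_Ioo_of_le_rhoFlow hΛ hφr ht hty hy.le
    obtain ⟨u, rfl⟩ : y ∈ Set.range φ :=
      hφr ▸ ⟨ht.trans_lt hty, hy.trans_le (rhoFlow_le hΛ hφr _ _)⟩
    rw [rhoFlow_phi hφ hφr] at hy
    have hru := hφ.lt_iff_lt.1 hty
    have hur := hφ.lt_iff_lt.1 hy
    refine ⟨(u - r) / 2, by linarith, by linarith, ?_⟩
    rw [rhoFlow_phi hφ hφr]
    exact hφ.monotone (by linarith)

lemma exists_rhoFlow_neg_two_mul_le_iff (hΛ : 0 < Λ) (hφ : StrictMono φ)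
    (hφr : Set.range φ = Set.Ioo (-Λ) Λ) {ε t x : ℝ} (ht : t ≤ Λ) (hxt : x < t) :
    (∃ δ, 0 < δ ∧ δ < ε ∧ rhoFlow Λ φ (-(2 * δ)) t ≤ x) ↔ rhoFlow Λ φ (-(2 * ε)) t < x := by
  constructor
  · rintro ⟨δ, -, hδε, hx⟩
    obtain ⟨r, rfl⟩ : t ∈ Set.range φ := hφr ▸ mem_Ioo_of_rhoFlow_le hΛ hφr ht hxt hx
    rw [rhoFlow_phi hφ hφr] at hx ⊢
    exact (hφ (by linarith)).trans_le hx
  · intro hx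
    obtain ⟨r, rfl⟩ : t ∈ Set.range φ := hφr ▸ mem_Ioo_of_rhoFlow_le hΛ hφr ht hxt hx.le
    obtain ⟨u, rfl⟩ : x ∈ Set.range φ :=
      hφr ▸ ⟨(neg_le_rhoFlow hΛ hφr _ _).trans_lt hx, hxt.trans_le ht⟩
    rw [rhoFlow_phi hφ hφr] at hx
    have hur := hφ.lt_iff_lt.1 hxt
    have hru := hφ.lt_iff_lt.1 hx
    refine ⟨(r - u) / 2, by linarith, by linarith, ?_⟩
    rw [rhoFlow_phi hφ hφr]
    exact hφ.monotone (by linarith)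

end Rho

/-- `flow ε` agrees with the paper's `(T_M)_ε` for `ε ≥ 0`, for data `Λ > 0` and
`φ : ℝ → (-Λ, Λ)` a strictly increasing bijection. -/
structure IsTMFlow (Λ : ℝ) (φ : ℝ → ℝ) (flow : ℝ → ℝ × ℝ → ℝ × ℝ) : Prop where
  pos : 0 < Λ
  strictMono : StrictMono φ
  range_eq : Set.range φ = Set.Ioo (-Λ) Λ
  apply_S : ∀ ε : ℝ, 0 ≤ ε → ∀ k : ℤ, ∀ p ∈ Sset Λ,
    flow ε ((Tmap Λ ^ k) p) = (Tmap Λ ^ k) (rhoFlow Λ φ (-ε) p.1, rhoFlow Λ φ ε p.2)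
  apply_L : ∀ ε : ℝ, 0 ≤ ε → ∀ k : ℤ, ∀ p ∈ Lset Λ,
    flow ε ((Tmap Λ ^ k) p) =
      (Tmap Λ ^ k) (-(2 * Λ) - rhoFlow Λ φ ε (-(2 * Λ) - p.1), rhoFlow Λ φ ε p.2)
  apply_A : ∀ ε : ℝ, 0 ≤ ε → ∀ k : ℤ, ∀ p ∈ Aset Λ,
    flow ε ((Tmap Λ ^ k) p) =
      (Tmap Λ ^ k) (rhoFlow Λ φ (-ε) p.1, 2 * Λ - rhoFlow Λ φ (-ε) (2 * Λ - p.2))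

def Interleaved (flow : ℝ → ℝ × ℝ → ℝ × ℝ) (δ : ℝ) (v w : ℝ × ℝ) : Prop :=
  Mle v (flow δ w) ∧ Mle w (flow δ v)

lemma dInt_lt_ofReal_iff {flow : ℝ → ℝ × ℝ → ℝ × ℝ} {v w : ℝ × ℝ} {ε : ℝ} :
    dInt flow v w < ENNReal.ofReal ε ↔ ∃ δ, 0 < δ ∧ δ < ε ∧ Interleaved flow δ v w := by
  rw [dInt, sInf_lt_iff]
  constructor
  · rintro ⟨_, ⟨δ, hδ, rfl, h⟩, hlt⟩
    exact ⟨δ, hδ, (ENNReal.ofReal_lt_ofReal_iff'.1 hlt).1, h⟩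
  · rintro ⟨δ, hδ, hδε, h⟩
    exact ⟨_, ⟨δ, hδ, rfl, h⟩, ENNReal.ofReal_lt_ofReal_iff'.2 ⟨hδε, hδ.trans hδε⟩⟩

lemma dInt_congr {flow : ℝ → ℝ × ℝ → ℝ × ℝ} {v w v' w' : ℝ × ℝ}
    (h : ∀ δ, 0 < δ → (Interleaved flow δ v w ↔ Interleaved flow δ v' w')) :
    dInt flow v w = dInt flow v' w' := by
  unfold dInt
  congr 1
  ext e
  exact exists_congr fun δ =>
    ⟨fun ⟨hδ, he, hi⟩ => ⟨hδ, he, (h δ hδ).1 hi⟩, fun ⟨hδ, he, hi⟩ => ⟨hδ, he, (h δ hδ).2 hi⟩⟩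

lemma exists_dInt_lt_ofReal_iff {flow : ℝ → ℝ × ℝ → ℝ × ℝ} (s : Set (ℝ × ℝ)) (v : ℝ × ℝ)
    (ε : ℝ) : (∃ w ∈ s, dInt flow v w < ENNReal.ofReal ε) ↔
      ∃ δ, 0 < δ ∧ δ < ε ∧ ∃ w ∈ s, Interleaved flow δ v w := by
  simp only [dInt_lt_ofReal_iff]
  exact ⟨fun ⟨w, hw, δ, hδ, hδε, h⟩ => ⟨δ, hδ, hδε, w, hw, h⟩,
    fun ⟨δ, hδ, hδε, w, hw, h⟩ => ⟨w, hw, δ, hδ, hδε, h⟩⟩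

namespace IsTMFlow

variable {Λ : ℝ} {φ : ℝ → ℝ} {flow : ℝ → ℝ × ℝ → ℝ × ℝ} (hflow : IsTMFlow Λ φ flow)
include hflow

lemma apply_of_mem_S {δ : ℝ} (hδ : 0 ≤ δ) {p : ℝ × ℝ} (hp : p ∈ Sset Λ) :
    flow δ p = (rhoFlow Λ φ (-δ) p.1, rhoFlow Λ φ δ p.2) := by
  simpa using hflow.apply_S δ hδ 0 p hp

lemma apply_of_mem_L {δ : ℝ} (hδ : 0 ≤ δ) {p : ℝ × ℝ} (hp : p ∈ Lset Λ) :
    flow δ p = (-(2 * Λ) - rhoFlow Λ φ δ (-(2 * Λ) - p.1), rhoFlow Λ φ δ p.2) := by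
  simpa using hflow.apply_L δ hδ 0 p hp

lemma apply_of_mem_A {δ : ℝ} (hδ : 0 ≤ δ) {p : ℝ × ℝ} (hp : p ∈ Aset Λ) :
    flow δ p = (rhoFlow Λ φ (-δ) p.1, 2 * Λ - rhoFlow Λ φ (-δ) (2 * Λ - p.2)) := by
  simpa using hflow.apply_A δ hδ 0 p hp

lemma zpow_apply_of_mem_fundDomain {δ : ℝ} (hδ : 0 ≤ δ) {q : ℝ × ℝ} (hq : q ∈ fundDomain Λ)
    (k : ℤ) : flow δ ((Tmap Λ ^ k) q) = (Tmap Λ ^ k) (flow δ q) := by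
  rcases hq with (hq | hq) | hq
  · rw [hflow.apply_S δ hδ k q hq, hflow.apply_of_mem_S hδ hq]
  · rw [hflow.apply_L δ hδ k q hq, hflow.apply_of_mem_L hδ hq]
  · rw [hflow.apply_A δ hδ k q hq, hflow.apply_of_mem_A hδ hq]

lemma zpow_apply {δ : ℝ} (hδ : 0 ≤ δ) {p : ℝ × ℝ} (hp : p ∈ Mstrip Λ) (j : ℤ) :
    flow δ ((Tmap Λ ^ j) p) = (Tmap Λ ^ j) (flow δ p) := by
  obtain ⟨k, q, hq, rfl⟩ := exists_eq_zpow_mem_fundDomain hflow.pos hp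
  rw [← Equiv.Perm.mul_apply, ← zpow_add, hflow.zpow_apply_of_mem_fundDomain hδ hq,
    hflow.zpow_apply_of_mem_fundDomain hδ hq, zpow_add, Equiv.Perm.mul_apply]

lemma interleaved_zpow_iff {δ : ℝ} (hδ : 0 ≤ δ) {v w : ℝ × ℝ} (hv : v ∈ Mstrip Λ)
    (hw : w ∈ Mstrip Λ) (k : ℤ) :
    Interleaved flow δ ((Tmap Λ ^ k) v) ((Tmap Λ ^ k) w) ↔ Interleaved flow δ v w := by
  rw [Interleaved, hflow.zpow_apply hδ hv, hflow.zpow_apply hδ hw, Mle_zpow_iff, Mle_zpow_iff,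
    Interleaved]

lemma exists_bdryM_dInt_lt_zpow_iff {v : ℝ × ℝ} (hv : v ∈ Mstrip Λ) (k : ℤ) (e : ℝ≥0∞) :
    (∃ w ∈ bdryM Λ, dInt flow ((Tmap Λ ^ k) v) w < e) ↔ ∃ w ∈ bdryM Λ, dInt flow v w < e := by
  rw [(Tmap Λ ^ k).surjective.exists]
  refine exists_congr fun w => ?_
  rw [zpow_mem_bdryM_iff]
  refine and_congr_right fun hw => ?_
  rw [dInt_congr fun δ hδ => hflow.interleaved_zpow_iff hδ.le hv hw.1 k]

lemma apply_Tmap {δ : ℝ} (hδ : 0 ≤ δ) {q : ℝ × ℝ} (hq : q ∈ fundDomain Λ) :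
    flow δ (Tmap Λ q) = Tmap Λ (flow δ q) := by
  simpa using hflow.zpow_apply_of_mem_fundDomain hδ hq 1

lemma snd_apply_lt_of_add_eq_neg {δ : ℝ} (hδ : 0 ≤ δ) {w : ℝ × ℝ}
    (hw : w.1 + w.2 = -(2 * Λ)) (hw2 : w.2 < -Λ) : (flow δ w).2 < -Λ := by
  have hΛ := hflow.pos
  -- `w = T^(2m) w₀` with `m ≤ -1` and `w₀` on the lower edge of `L` or of `T(A)`
  obtain ⟨m, w₀, rfl, h1, h2⟩ := exists_eq_zpow_two_mul_snd_mem_Ico hΛ w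
  rw [Tmap_zpow_two_mul_apply] at hw hw2
  dsimp only at hw hw2
  have hm := mul_intCast_le_neg (by positivity : 0 < 4 * Λ) (by linarith : 4 * Λ * m < 0)
  have hflow₀ : (flow δ w₀).2 < 3 * Λ := by
    rcases lt_or_ge w₀.2 Λ with hy | hy
    · rw [hflow.apply_of_mem_L hδ ⟨⟨by linarith, by linarith⟩, by linarith, hy⟩]
      linarith [rhoFlow_le hΛ hflow.range_eq δ w₀.2]
    · obtain ⟨q, rfl⟩ := (Tmap Λ).surjective w₀
      simp only [Tmap_apply] at h1 h2 hw hy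
      have hq : q ∈ Aset Λ := ⟨⟨by linarith, by linarith⟩, by linarith, by linarith⟩
      rw [hflow.apply_Tmap hδ (Or.inr hq), Tmap_apply, hflow.apply_of_mem_A hδ hq]
      linarith [neg_lt_rhoFlow hΛ hflow.range_eq (by linarith : -Λ < q.1) (-δ)]
  rw [hflow.zpow_apply hδ ⟨by linarith, by linarith⟩, Tmap_zpow_two_mul_apply]
  dsimp only
  linarith

lemma lt_fst_apply_of_add_eq {δ : ℝ} (hδ : 0 ≤ δ) {w : ℝ × ℝ}
    (hw : w.1 + w.2 = 2 * Λ) (hw1 : Λ < w.1) : Λ < (flow δ w).1 := by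
  have hΛ := hflow.pos
  -- `w = T^(2m) w₀` with `m ≤ -1` and `w₀` on the upper edge of `A` or of `T(L)`
  obtain ⟨m, w₀, rfl, h1, h2⟩ := exists_eq_zpow_two_mul_fst_mem_Ioc hΛ w
  rw [Tmap_zpow_two_mul_apply] at hw hw1
  dsimp only at hw hw1
  have hm := mul_intCast_le_neg (by positivity : 0 < 4 * Λ) (by linarith : 4 * Λ * m < 0)
  have hflow₀ : -(3 * Λ) < (flow δ w₀).1 := by
    rcases lt_or_ge (-Λ) w₀.1 with hx | hx
    · rw [hflow.apply_of_mem_A hδ ⟨⟨by linarith, by linarith⟩, hx, by linarith⟩]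
      linarith [neg_le_rhoFlow hΛ hflow.range_eq (-δ) w₀.1]
    · obtain ⟨q, rfl⟩ := (Tmap Λ).surjective w₀
      simp only [Tmap_apply] at h1 h2 hw hx
      have hq : q ∈ Lset Λ := ⟨⟨by linarith, by linarith⟩, by linarith, by linarith⟩
      rw [hflow.apply_Tmap hδ (Or.inl (Or.inr hq)), Tmap_apply, hflow.apply_of_mem_L hδ hq]
      linarith [rhoFlow_lt hΛ hflow.range_eq (by linarith : q.2 < Λ) δ]
  rw [hflow.zpow_apply hδ ⟨by linarith, by linarith⟩, Tmap_zpow_two_mul_apply]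
  dsimp only
  linarith

lemma Mle_apply_Tmap_of_mem_S {δ : ℝ} (hδ : 0 ≤ δ) {p : ℝ × ℝ} (hp : p ∈ Sset Λ) :
    Mle (flow δ p) (Tmap Λ p) := by
  rw [hflow.apply_of_mem_S hδ hp, Mle, Tmap_apply]
  obtain ⟨h1, h2, h3, h4⟩ := hp
  exact ⟨by linarith [neg_le_rhoFlow hflow.pos hflow.range_eq (-δ) p.1],
    by linarith [rhoFlow_le hflow.pos hflow.range_eq δ p.2]⟩

lemma not_interleaved_of_mem_S {δ : ℝ} (hδ : 0 ≤ δ) {p w : ℝ × ℝ} (hp : p ∈ Sset Λ)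
    (hw : w ∈ bdryM Λ) : ¬ Interleaved flow δ p w := by
  rintro ⟨⟨hpw1, hpw2⟩, hwp1, hwp2⟩
  rw [hflow.apply_of_mem_S hδ hp] at hwp1 hwp2
  obtain ⟨h1, h2, h3, h4⟩ := hp
  have := neg_lt_rhoFlow hflow.pos hflow.range_eq h1 (-δ)
  have := rhoFlow_lt hflow.pos hflow.range_eq h4 δ
  rcases add_eq_or_of_mem_bdryM hflow.pos hw with hsum | hsum
  · linarith [hflow.lt_fst_apply_of_add_eq hδ hsum (by linarith)]
  · linarith [hflow.snd_apply_lt_of_add_eq_neg hδ hsum (by linarith)]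

lemma not_Mle_apply_Tmap_iff_of_mem_L {δ : ℝ} (hδ : 0 ≤ δ) {p : ℝ × ℝ} (hp : p ∈ Lset Λ) :
    ¬ Mle (flow δ p) (Tmap Λ p) ↔ p.2 < rhoFlow Λ φ δ (-(2 * Λ) - p.1) := by
  rw [hflow.apply_of_mem_L hδ hp, Mle, Tmap_apply]
  have := rhoFlow_le hflow.pos hflow.range_eq δ p.2
  have := hp.2.1
  have := hflow.pos
  dsimp only
  constructor
  · intro h
    by_contra! h'
    exact h ⟨by linarith, by linarith⟩
  · rintro h ⟨h', -⟩
    linarith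

lemma not_Mle_apply_Tmap_iff_of_mem_A {δ : ℝ} (hδ : 0 ≤ δ) {p : ℝ × ℝ} (hp : p ∈ Aset Λ) :
    ¬ Mle (flow δ p) (Tmap Λ p) ↔ rhoFlow Λ φ (-δ) (2 * Λ - p.2) < p.1 := by
  rw [hflow.apply_of_mem_A hδ hp, Mle, Tmap_apply]
  have := neg_le_rhoFlow hflow.pos hflow.range_eq (-δ) p.1
  have := hp.2.2
  have := hflow.pos
  dsimp only
  constructor
  · intro h
    by_contra! h'
    exact h ⟨by linarith, by linarith⟩
  · rintro h ⟨-, h'⟩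
    linarith

lemma exists_interleaved_iff_of_mem_L {δ : ℝ} (hδ : 0 ≤ δ) {p : ℝ × ℝ} (hp : p ∈ Lset Λ) :
    (∃ w ∈ bdryM Λ, Interleaved flow δ p w) ↔
      p.2 ≤ rhoFlow Λ φ (2 * δ) (-(2 * Λ) - p.1) := by
  have hΛ := hflow.pos
  have hφ := hflow.strictMono
  have hφr := hflow.range_eq
  have hflow_p := hflow.apply_of_mem_L hδ hp
  have hflow_edge : ∀ c, -Λ ≤ c → c < Λ → flow δ (-(2 * Λ) - c, c) =
      (-(2 * Λ) - rhoFlow Λ φ δ c, rhoFlow Λ φ δ c) := fun c hc1 hc2 => by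
    rw [hflow.apply_of_mem_L hδ ⟨⟨by dsimp only; linarith, by dsimp only; linarith⟩,
      by dsimp only; linarith, hc2⟩, sub_sub_cancel]
  obtain ⟨⟨h1, h2⟩, h3, h4⟩ := hp
  constructor
  · rintro ⟨w, hw, ⟨hpw1, hpw2⟩, hwp1, hwp2⟩
    rw [hflow_p] at hwp1 hwp2
    have hw2 : w.2 < Λ := hwp2.trans_lt (rhoFlow_lt hΛ hφr h4 δ)
    rcases add_eq_or_of_mem_bdryM hΛ hw with hsum | hsum
    · linarith [hflow.lt_fst_apply_of_add_eq hδ hsum (by linarith)]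
    have hw2' : -Λ ≤ w.2 := by
      by_contra! h
      linarith [hflow.snd_apply_lt_of_add_eq_neg hδ hsum h]
    obtain ⟨w1, c⟩ := w
    obtain rfl : w1 = -(2 * Λ) - c := by dsimp only at hsum; linarith
    rw [hflow_edge c hw2' hw2] at hpw2
    dsimp only at hpw2 hwp1
    calc p.2 ≤ rhoFlow Λ φ δ c := hpw2
      _ ≤ rhoFlow Λ φ δ (rhoFlow Λ φ δ (-(2 * Λ) - p.1)) :=
        rhoFlow_monotone hΛ hφ hφr δ (by linarith)
      _ = rhoFlow Λ φ (2 * δ) (-(2 * Λ) - p.1) := by rw [rhoFlow_rhoFlow hΛ hφ hφr, ← two_mul]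
  · intro h
    set c := rhoFlow Λ φ δ (-(2 * Λ) - p.1) with hc
    have hcc : rhoFlow Λ φ δ c = rhoFlow Λ φ (2 * δ) (-(2 * Λ) - p.1) := by
      rw [hc, rhoFlow_rhoFlow hΛ hφ hφr, ← two_mul]
    refine ⟨(-(2 * Λ) - c, c), mem_bdryM_of_add_eq hΛ (Or.inr (by ring)), ?_, ?_⟩
    · rw [Mle, hflow_edge c (neg_le_rhoFlow hΛ hφr δ _) (rhoFlow_lt hΛ hφr (by linarith) δ), hcc]
      have := self_le_rhoFlow hΛ hφ hφr (by positivity : 0 ≤ 2 * δ)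
        (by linarith : -(2 * Λ) - p.1 ≤ Λ)
      exact ⟨by linarith, h⟩
    · rw [Mle, hflow_p]
      exact ⟨le_rfl, rhoFlow_monotone hΛ hφ hφr δ (by linarith)⟩

lemma exists_interleaved_iff_of_mem_A {δ : ℝ} (hδ : 0 ≤ δ) {p : ℝ × ℝ} (hp : p ∈ Aset Λ) :
    (∃ w ∈ bdryM Λ, Interleaved flow δ p w) ↔
      rhoFlow Λ φ (-(2 * δ)) (2 * Λ - p.2) ≤ p.1 := by
  have hΛ := hflow.pos
  have hφ := hflow.strictMono
  have hφr := hflow.range_eq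
  have hflow_p := hflow.apply_of_mem_A hδ hp
  have hflow_edge : ∀ a, -Λ < a → a ≤ Λ → flow δ (a, 2 * Λ - a) =
      (rhoFlow Λ φ (-δ) a, 2 * Λ - rhoFlow Λ φ (-δ) a) := fun a ha1 ha2 => by
    rw [hflow.apply_of_mem_A hδ ⟨⟨by dsimp only; linarith, by dsimp only; linarith⟩,
      ha1, by dsimp only; linarith⟩, sub_sub_cancel]
  obtain ⟨⟨h1, h2⟩, h3, h4⟩ := hp
  constructor
  · rintro ⟨w, hw, ⟨hpw1, hpw2⟩, hwp1, hwp2⟩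
    rw [hflow_p] at hwp1 hwp2
    have hw1 : -Λ < w.1 := (neg_lt_rhoFlow hΛ hφr h3 (-δ)).trans_le hwp1
    rcases add_eq_or_of_mem_bdryM hΛ hw with hsum | hsum
    swap
    · linarith [hflow.snd_apply_lt_of_add_eq_neg hδ hsum (by linarith)]
    have hw1' : w.1 ≤ Λ := by
      by_contra! h
      linarith [hflow.lt_fst_apply_of_add_eq hδ hsum h]
    obtain ⟨a, w2⟩ := w
    obtain rfl : w2 = 2 * Λ - a := by dsimp only at hsum; linarith
    rw [hflow_edge a hw1 hw1'] at hpw1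
    dsimp only at hpw1 hwp2
    calc rhoFlow Λ φ (-(2 * δ)) (2 * Λ - p.2)
        = rhoFlow Λ φ (-δ) (rhoFlow Λ φ (-δ) (2 * Λ - p.2)) := by
          rw [rhoFlow_rhoFlow hΛ hφ hφr, ← neg_add, ← two_mul]
      _ ≤ rhoFlow Λ φ (-δ) a := rhoFlow_monotone hΛ hφ hφr (-δ) (by linarith)
      _ ≤ p.1 := hpw1
  · intro h
    set a := rhoFlow Λ φ (-δ) (2 * Λ - p.2) with ha
    have haa : rhoFlow Λ φ (-δ) a = rhoFlow Λ φ (-(2 * δ)) (2 * Λ - p.2) := by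
      rw [ha, rhoFlow_rhoFlow hΛ hφ hφr, ← neg_add, ← two_mul]
    refine ⟨(a, 2 * Λ - a), mem_bdryM_of_add_eq hΛ (Or.inl (by ring)), ?_, ?_⟩
    · rw [Mle, hflow_edge a (neg_lt_rhoFlow hΛ hφr (by linarith) (-δ)) (rhoFlow_le hΛ hφr _ _),
        haa]
      have := rhoFlow_le_self hΛ hφ hφr (by linarith : -(2 * δ) ≤ 0)
        (by linarith : -Λ ≤ 2 * Λ - p.2)
      exact ⟨h, by linarith⟩
    · rw [Mle, hflow_p]
      exact ⟨rhoFlow_monotone hΛ hφ hφr (-δ) (by linarith), le_rfl⟩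

lemma exists_bdryM_dInt_lt_iff_of_mem_fundDomain {p : ℝ × ℝ} (hp : p ∈ fundDomain Λ)
    (hpb : p ∉ bdryM Λ) {ε : ℝ} (hε : 0 < ε) :
    (∃ w ∈ bdryM Λ, dInt flow p w < ENNReal.ofReal ε) ↔ ¬ Mle (flow (2 * ε) p) (Tmap Λ p) := by
  have hΛ := hflow.pos
  have hφ := hflow.strictMono
  have hφr := hflow.range_eq
  have h2ε : 0 ≤ 2 * ε := by positivity
  have hsum : p.1 + p.2 ≠ 2 * Λ ∧ p.1 + p.2 ≠ -(2 * Λ) :=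
    ⟨fun h => hpb (mem_bdryM_of_add_eq hΛ (Or.inl h)),
      fun h => hpb (mem_bdryM_of_add_eq hΛ (Or.inr h))⟩
  rw [exists_dInt_lt_ofReal_iff]
  rcases hp with (hS | hL) | hA
  · simp only [hflow.Mle_apply_Tmap_of_mem_S h2ε hS, not_true_eq_false, iff_false, not_exists,
      not_and]
    exact fun δ hδ _ w hw => hflow.not_interleaved_of_mem_S hδ.le hS hw
  · have hx := hL.2.1
    have hM := lt_of_le_of_ne hL.1.1 (Ne.symm hsum.2)
    rw [hflow.not_Mle_apply_Tmap_iff_of_mem_L h2ε hL,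
      ← exists_le_rhoFlow_two_mul_iff hΛ hφ hφr (by linarith) (by linarith)]
    exact exists_congr fun δ => and_congr_right fun hδ => and_congr_right fun _ =>
      hflow.exists_interleaved_iff_of_mem_L hδ.le hL
  · have hy := hA.2.2
    have hM := lt_of_le_of_ne hA.1.2 hsum.1
    rw [hflow.not_Mle_apply_Tmap_iff_of_mem_A h2ε hA,
      ← exists_rhoFlow_neg_two_mul_le_iff hΛ hφ hφr (by linarith) (by linarith)]
    exact exists_congr fun δ => and_congr_right fun hδ => and_congr_right fun _ =>
      hflow.exists_interleaved_iff_of_mem_A hδ.le hA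

end IsTMFlow

/-- For `v ∈ M ∖ ∂M` and `0 < ε < ∞`, there exists `w ∈ ∂M` with `d (v, w) < ε` if and
only if `(T_M)_{2ε} v ⪯ T v` fails. -/
theorem near_boundary_iff (Λ : ℝ) (hΛ : 0 < Λ) (φ : ℝ → ℝ) (hφmono : StrictMono φ)
    (hφrange : Set.range φ = Set.Ioo (-Λ) Λ)
    (flow : ℝ → ℝ × ℝ → ℝ × ℝ)
    (hflowS : ∀ ε : ℝ, 0 ≤ ε → ∀ k : ℤ, ∀ p ∈ Sset Λ,
      flow ε ((Tmap Λ ^ k) p) =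
        (Tmap Λ ^ k) (rhoFlow Λ φ (-ε) p.1, rhoFlow Λ φ ε p.2))
    (hflowL : ∀ ε : ℝ, 0 ≤ ε → ∀ k : ℤ, ∀ p ∈ Lset Λ,
      flow ε ((Tmap Λ ^ k) p) =
        (Tmap Λ ^ k) (-(2 * Λ) - rhoFlow Λ φ ε (-(2 * Λ) - p.1), rhoFlow Λ φ ε p.2))
    (hflowA : ∀ ε : ℝ, 0 ≤ ε → ∀ k : ℤ, ∀ p ∈ Aset Λ,
      flow ε ((Tmap Λ ^ k) p) =
        (Tmap Λ ^ k) (rhoFlow Λ φ (-ε) p.1, 2 * Λ - rhoFlow Λ φ (-ε) (2 * Λ - p.2)))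
    (v : ℝ × ℝ) (hv : v ∈ Mstrip Λ) (hvb : v ∉ bdryM Λ) (ε : ℝ) (hε : 0 < ε) :
    (∃ w ∈ bdryM Λ, dInt flow v w < ENNReal.ofReal ε) ↔
      ¬ Mle (flow (2 * ε) v) (Tmap Λ v) := by
  have hflow : IsTMFlow Λ φ flow := ⟨hΛ, hφmono, hφrange, hflowS, hflowL, hflowA⟩
  obtain ⟨k, p, hp, rfl⟩ := exists_eq_zpow_mem_fundDomain hΛ hv
  have hpM := mem_Mstrip_of_mem_fundDomain hp
  rw [zpow_mem_bdryM_iff] at hvb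
  rw [hflow.exists_bdryM_dInt_lt_zpow_iff hpM, hflow.zpow_apply (by positivity) hpM,
    Tmap_zpow_apply_comm, Mle_zpow_iff]
  exact hflow.exists_bdryM_dInt_lt_iff_of_mem_fundDomain hp hvb hε

end
end
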